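/- The universal triangular cover of a connected graph is unique up to graph isomorphism: if p : G̃ → G and q : Ḡ → G are triangular covering maps with G̃ and Ḡ both triangularly simply connected, then G̃ ≅ Ḡ. -/

import Mathlib

open SimpleGraph

/-- The closed neighbourhood of a vertex. -/
def closedNbhd {V : Type*} (G : SimpleGraph V) (v : V) : Set V := insert v (G.neighborSet v)

/-- A triangular covering map: a graph homomorphism between connected graphs whose
restriction to each closed neighbourhood is an isomorphism onto the closed
neighbourhood of the image vertex. -/
structure IsTriangularCover {V' V : Type*} {G' : SimpleGraph V'} {G : SimpleGraph V}
    (p : G' →g G) : Prop where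
  connDom : G'.Connected
  connCod : G.Connected
  injOn : ∀ v : V', Set.InjOn p (closedNbhd G' v)
  surjOn : ∀ v : V', Set.SurjOn p (closedNbhd G' v) (closedNbhd G (p v))
  reflectAdj : ∀ v x y : V', x ∈ closedNbhd G' v → y ∈ closedNbhd G' v →
    G.Adj (p x) (p y) → G'.Adj x y

/-- Elementary moves on walks (recorded as lists of vertices): triangle
removal/insertion and dead end removal/insertion. -/
inductive ElemMove {V : Type*} (G : SimpleGraph V) : List V → List V → Prop
  | triRemove (l₁ l₂ : List V) (a b c : V) (h₁ : G.Adj a b) (h₂ : G.Adj b c) (h₃ : G.Adj a c) :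
      ElemMove G (l₁ ++ a :: b :: c :: l₂) (l₁ ++ a :: c :: l₂)
  | triInsert (l₁ l₂ : List V) (a b c : V) (h₁ : G.Adj a b) (h₂ : G.Adj b c) (h₃ : G.Adj a c) :
      ElemMove G (l₁ ++ a :: c :: l₂) (l₁ ++ a :: b :: c :: l₂)
  | deadEndRemove (l₁ l₂ : List V) (a b : V) (h : G.Adj a b) :
      ElemMove G (l₁ ++ a :: b :: a :: l₂) (l₁ ++ a :: l₂)
  | deadEndInsert (l₁ l₂ : List V) (a b : V) (h : G.Adj a b) :
      ElemMove G (l₁ ++ a :: l₂) (l₁ ++ a :: b :: a :: l₂)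

/-- Two walks are homotopic if one can be transformed into the other by a finite
sequence of elementary moves. -/
def Homotopic {V : Type*} (G : SimpleGraph V) : List V → List V → Prop :=
  Relation.ReflTransGen (ElemMove G)

/-- A graph is triangularly simply connected if it is connected and every closed walk
is homotopic to a trivial walk. -/
def TriSimplyConnected {V : Type*} (G : SimpleGraph V) : Prop :=
  G.Connected ∧ ∀ (v : V) (l : List V), (v :: l).Chain' G.Adj →
    (v :: l).getLast (List.cons_ne_nil v l) = v → Homotopic G (v :: l) [v]

/-!
A triangular cover has unique walk lifting, and each elementary move lifts along it (a triangle or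
dead end downstairs lifts because the cover is an isomorphism on closed neighbourhoods), so
homotopies lift. In a triangularly simply connected graph `H` any two walks with the same ends are
homotopic, hence a homomorphism `H →g G` lifts through every triangular cover of `G`: send `u` to
the end of the lift of the image of any walk from a base point to `u`. Lifting each of the two
simply connected covers through the other gives maps whose composites lift the identity and fix a
base point, so they are the identity by uniqueness of lifts.
-/

namespace ElemMove

variable {V W : Type*} {G : SimpleGraph V} {H : SimpleGraph W} {l m : List V}

theorem symm (h : ElemMove G l m) : ElemMove G m l := by
  cases h with
  | triRemove l₁ l₂ a b c h₁ h₂ h₃ => exact triInsert l₁ l₂ a b c h₁ h₂ h₃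
  | triInsert l₁ l₂ a b c h₁ h₂ h₃ => exact triRemove l₁ l₂ a b c h₁ h₂ h₃
  | deadEndRemove l₁ l₂ a b h => exact deadEndInsert l₁ l₂ a b h
  | deadEndInsert l₁ l₂ a b h => exact deadEndRemove l₁ l₂ a b h

theorem append_left (k : List V) (h : ElemMove G l m) : ElemMove G (k ++ l) (k ++ m) := by
  cases h with
  | triRemove l₁ l₂ a b c h₁ h₂ h₃ => simpa using triRemove (k ++ l₁) l₂ a b c h₁ h₂ h₃
  | triInsert l₁ l₂ a b c h₁ h₂ h₃ => simpa using triInsert (k ++ l₁) l₂ a b c h₁ h₂ h₃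
  | deadEndRemove l₁ l₂ a b h => simpa using deadEndRemove (k ++ l₁) l₂ a b h
  | deadEndInsert l₁ l₂ a b h => simpa using deadEndInsert (k ++ l₁) l₂ a b h

theorem append_right (k : List V) (h : ElemMove G l m) : ElemMove G (l ++ k) (m ++ k) := by
  cases h with
  | triRemove l₁ l₂ a b c h₁ h₂ h₃ => simpa using triRemove l₁ (l₂ ++ k) a b c h₁ h₂ h₃
  | triInsert l₁ l₂ a b c h₁ h₂ h₃ => simpa using triInsert l₁ (l₂ ++ k) a b c h₁ h₂ h₃
  | deadEndRemove l₁ l₂ a b h => simpa using deadEndRemove l₁ (l₂ ++ k) a b h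
  | deadEndInsert l₁ l₂ a b h => simpa using deadEndInsert l₁ (l₂ ++ k) a b h

theorem map (f : G →g H) (h : ElemMove G l m) : ElemMove H (l.map f) (m.map f) := by
  cases h with
  | triRemove l₁ l₂ a b c h₁ h₂ h₃ =>
    simpa using triRemove _ _ _ _ _ (f.map_adj h₁) (f.map_adj h₂) (f.map_adj h₃)
  | triInsert l₁ l₂ a b c h₁ h₂ h₃ =>
    simpa using triInsert _ _ _ _ _ (f.map_adj h₁) (f.map_adj h₂) (f.map_adj h₃)
  | deadEndRemove l₁ l₂ a b h => simpa using deadEndRemove _ _ _ _ (f.map_adj h)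
  | deadEndInsert l₁ l₂ a b h => simpa using deadEndInsert _ _ _ _ (f.map_adj h)

theorem isChain (h : ElemMove G l m) (hl : l.IsChain G.Adj) : m.IsChain G.Adj := by
  cases h <;> simp_all [List.isChain_append, List.isChain_cons_cons, G.adj_comm]

theorem head?_eq (h : ElemMove G l m) : l.head? = m.head? := by
  cases h <;> simp [List.head?_append]

theorem getLast?_eq (h : ElemMove G l m) : l.getLast? = m.getLast? := by
  cases h <;> simp [List.getLast?_cons_cons]

end ElemMove

namespace Homotopic

variable {V W : Type*} {G : SimpleGraph V} {H : SimpleGraph W} {l m n : List V}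

@[refl] theorem refl (l : List V) : Homotopic G l l := Relation.ReflTransGen.refl

theorem single (h : ElemMove G l m) : Homotopic G l m := Relation.ReflTransGen.single h

theorem trans (h₁ : Homotopic G l m) (h₂ : Homotopic G m n) : Homotopic G l n :=
  Relation.ReflTransGen.trans h₁ h₂

theorem symm (h : Homotopic G l m) : Homotopic G m l := by
  induction h with
  | refl => rfl
  | tail _ e ih => exact (single e.symm).trans ih

theorem append_left (k : List V) (h : Homotopic G l m) : Homotopic G (k ++ l) (k ++ m) :=
  Relation.ReflTransGen.lift (k ++ ·) (fun _ _ e => e.append_left k) _ _ h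

theorem append_right (k : List V) (h : Homotopic G l m) : Homotopic G (l ++ k) (m ++ k) :=
  Relation.ReflTransGen.lift (· ++ k) (fun _ _ e => e.append_right k) _ _ h

theorem map (f : G →g H) (h : Homotopic G l m) : Homotopic H (l.map f) (m.map f) :=
  Relation.ReflTransGen.lift (List.map f) (fun _ _ e => e.map f) _ _ h

theorem isChain (h : Homotopic G l m) (hl : l.IsChain G.Adj) : m.IsChain G.Adj := by
  induction h with
  | refl => exact hl
  | tail _ e ih => exact e.isChain ih

theorem head?_eq (h : Homotopic G l m) : l.head? = m.head? := by
  induction h with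
  | refl => rfl
  | tail _ e ih => exact ih.trans e.head?_eq

theorem getLast?_eq (h : Homotopic G l m) : l.getLast? = m.getLast? := by
  induction h with
  | refl => rfl
  | tail _ e ih => exact ih.trans e.getLast?_eq

end Homotopic

namespace SimpleGraph.Walk

variable {V : Type*} {G : SimpleGraph V} {u v w : V}

@[simp] theorem head?_support (p : G.Walk u v) : p.support.head? = some u := by
  rw [← p.cons_tail_support]; rfl

@[simp] theorem getLast?_support (p : G.Walk u v) : p.support.getLast? = some v := by
  rw [List.getLast?_eq_some_getLast p.support_ne_nil, p.getLast_support]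

theorem homotopic_append_left (p : G.Walk u v) {q q' : G.Walk v w}
    (h : Homotopic G q.support q'.support) :
    Homotopic G (p.append q).support (p.append q').support := by
  simpa only [support_append_eq_support_dropLast_append] using h.append_left _

theorem homotopic_append_right {p p' : G.Walk u v} (q : G.Walk v w)
    (h : Homotopic G p.support p'.support) :
    Homotopic G (p.append q).support (p'.append q).support := by
  simpa only [support_append] using h.append_right _

theorem homotopic_append_reverse (p : G.Walk u v) :
    Homotopic G (p.append p.reverse).support [u] := by
  induction p with
  | nil => rfl
  | @cons u w v h p ih =>
    have hsupp : ((cons h p).append (cons h p).reverse).support =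
        [u] ++ (p.append p.reverse).support ++ [u] := by
      simp [support_append]
    rw [hsupp]
    exact ((ih.append_left [u]).append_right [u]).trans
      (.single (.deadEndRemove [] [] u w h))

end SimpleGraph.Walk

namespace TriSimplyConnected

variable {V : Type*} {G : SimpleGraph V} {u v : V}

theorem homotopic_nil_of_closed (hG : TriSimplyConnected G) (c : G.Walk u u) :
    Homotopic G c.support [u] := by
  rw [← c.cons_tail_support]
  refine hG.2 u _ ?_ ?_
  · rw [c.cons_tail_support]; exact c.isChain_adj_support
  · simp only [c.cons_tail_support, c.getLast_support]

theorem homotopic (hG : TriSimplyConnected G) (p q : G.Walk u v) :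
    Homotopic G p.support q.support := by
  -- `p ≃ p (q⁻¹ q) = (p q⁻¹) q ≃ q`, the closed walk `p q⁻¹` being null-homotopic
  have hp : Homotopic G p.support (p.append (q.reverse.append q)).support := by
    simpa using p.homotopic_append_left (q := .nil)
      (by simpa using (q.reverse.homotopic_append_reverse).symm)
  have hq : Homotopic G ((p.append q.reverse).append q).support q.support := by
    simpa using Walk.homotopic_append_right (p' := .nil) q
      (hG.homotopic_nil_of_closed (p.append q.reverse))
  rw [Walk.append_assoc] at hp
  exact hp.trans hq

end TriSimplyConnected

namespace IsTriangularCover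

variable {U V W : Type*} {G : SimpleGraph V} {C : SimpleGraph W} {H : SimpleGraph U}
  {q : C →g G}

theorem exists_adj_map_eq (hq : IsTriangularCover q) {x : W} {b : V} (h : G.Adj (q x) b) :
    ∃ y, C.Adj x y ∧ q y = b := by
  obtain ⟨y, hy, rfl⟩ := hq.surjOn x (Set.mem_insert_of_mem _ h)
  exact ⟨y, hq.reflectAdj x x y (Set.mem_insert _ _) hy h, rfl⟩

theorem eq_of_adj_of_adj (hq : IsTriangularCover q) {x y z : W} (hxy : C.Adj x y)
    (hxz : C.Adj x z) (h : q y = q z) : y = z :=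
  hq.injOn x (Set.mem_insert_of_mem _ hxy) (Set.mem_insert_of_mem _ hxz) h

theorem adj_of_adj_of_adj (hq : IsTriangularCover q) {x y z : W} (hxy : C.Adj x y)
    (hxz : C.Adj x z) (h : G.Adj (q y) (q z)) : C.Adj y z :=
  hq.reflectAdj x y z (Set.mem_insert_of_mem _ hxy) (Set.mem_insert_of_mem _ hxz) h

theorem exists_walk_lift (hq : IsTriangularCover q) {u v : V} (w : G.Walk u v) {x : W}
    (hx : q x = u) : ∃ y, ∃ w' : C.Walk x y, w'.support.map q = w.support := by
  induction w generalizing x with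
  | nil => exact ⟨x, .nil, by simp [hx]⟩
  | cons h w ih =>
    obtain ⟨y, hxy, rfl⟩ := hq.exists_adj_map_eq (hx ▸ h)
    obtain ⟨z, w', hw'⟩ := ih rfl
    exact ⟨z, .cons hxy w', by simp [hx, hw']⟩

theorem surjective (hq : IsTriangularCover q) : Function.Surjective q := by
  intro v
  obtain ⟨x⟩ := hq.connDom.nonempty
  obtain ⟨w⟩ := hq.connCod.preconnected (q x) v
  obtain ⟨y, w', hw'⟩ := hq.exists_walk_lift w rfl
  refine ⟨y, ?_⟩
  simpa using congrArg List.getLast? hw'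

theorem eq_of_map_eq (hq : IsTriangularCover q) {l m : List W} (hl : l.IsChain C.Adj)
    (hm : m.IsChain C.Adj) (hhead : l.head? = m.head?) (hmap : l.map q = m.map q) :
    l = m := by
  have hlen : l.length = m.length := by simpa using congrArg List.length hmap
  refine List.ext_getElem hlen fun i hi hi' => ?_
  induction i with
  | zero => simpa [List.head?_eq_getElem?, hi, hi'] using hhead
  | succ i ih =>
    refine hq.eq_of_adj_of_adj (hl.getElem i (by omega)) ?_ ?_
    · rw [ih (by omega) (by omega)]; exact hm.getElem i (by omega)
    · simpa [hi, hi'] using congrArg (·[i + 1]?) hmap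

theorem exists_elemMove_lift (hq : IsTriangularCover q) {l m : List V} (e : ElemMove G l m)
    {l' : List W} (hl' : l'.IsChain C.Adj) (hmap : l'.map q = l) :
    ∃ m', ElemMove C l' m' ∧ m'.map q = m := by
  cases e with
  | triRemove l₁ l₂ a b c _ _ hac =>
    simp only [List.map_eq_append_iff, List.map_eq_cons_iff] at hmap
    obtain ⟨l₁', _, rfl, rfl, x, _, rfl, rfl, y, _, rfl, rfl, z, l₂', rfl, rfl, rfl⟩ := hmap
    simp only [List.isChain_append, List.isChain_cons_cons] at hl'
    obtain ⟨-, ⟨hxy, hyz, -⟩, -⟩ := hl'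
    have hxz := hq.adj_of_adj_of_adj hxy.symm hyz hac
    exact ⟨_, .triRemove l₁' l₂' x y z hxy hyz hxz, by simp⟩
  | triInsert l₁ l₂ a b c hab hbc _ =>
    simp only [List.map_eq_append_iff, List.map_eq_cons_iff] at hmap
    obtain ⟨l₁', _, rfl, rfl, x, _, rfl, rfl, z, l₂', rfl, rfl, rfl⟩ := hmap
    simp only [List.isChain_append, List.isChain_cons_cons] at hl'
    obtain ⟨-, ⟨hxz, -⟩, -⟩ := hl'
    obtain ⟨y, hxy, rfl⟩ := hq.exists_adj_map_eq hab
    have hyz := hq.adj_of_adj_of_adj hxy hxz hbc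
    exact ⟨_, .triInsert l₁' l₂' x y z hxy hyz hxz, by simp⟩
  | deadEndRemove l₁ l₂ a b _ =>
    simp only [List.map_eq_append_iff, List.map_eq_cons_iff] at hmap
    obtain ⟨l₁', _, rfl, rfl, x, _, rfl, rfl, y, _, rfl, _, x', l₂', rfl, hx', rfl⟩ := hmap
    simp only [List.isChain_append, List.isChain_cons_cons] at hl'
    obtain ⟨-, ⟨hxy, hyx', -⟩, -⟩ := hl'
    obtain rfl := hq.eq_of_adj_of_adj hxy.symm hyx' hx'.symm
    exact ⟨_, .deadEndRemove l₁' l₂' x y hxy, by simp⟩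
  | deadEndInsert l₁ l₂ a b hab =>
    simp only [List.map_eq_append_iff, List.map_eq_cons_iff] at hmap
    obtain ⟨l₁', _, rfl, rfl, x, l₂', rfl, rfl, rfl⟩ := hmap
    obtain ⟨y, hxy, rfl⟩ := hq.exists_adj_map_eq hab
    exact ⟨_, .deadEndInsert l₁' l₂' x y hxy, by simp⟩

theorem exists_homotopic_lift (hq : IsTriangularCover q) {l m : List V} (h : Homotopic G l m)
    {l' : List W} (hl' : l'.IsChain C.Adj) (hmap : l'.map q = l) :
    ∃ m', Homotopic C l' m' ∧ m'.map q = m := by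
  induction h with
  | refl => exact ⟨l', .refl l', hmap⟩
  | tail _ e ih =>
    obtain ⟨n', hn', hmap'⟩ := ih
    obtain ⟨m', e', rfl⟩ := hq.exists_elemMove_lift e (hn'.isChain hl') hmap'
    exact ⟨m', hn'.trans (.single e'), rfl⟩

theorem hom_ext (hq : IsTriangularCover q) (hH : H.Connected) {f₁ f₂ : H →g C}
    (h : ∀ u, q (f₁ u) = q (f₂ u)) (u₀ : U) (h₀ : f₁ u₀ = f₂ u₀) : f₁ = f₂ := by
  ext u
  obtain ⟨w⟩ := hH.preconnected u₀ u
  induction w with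
  | nil => exact h₀
  | cons hadj _ ih =>
    exact ih (hq.eq_of_adj_of_adj (f₁.map_adj hadj) (h₀ ▸ f₂.map_adj hadj) (h _))

end IsTriangularCover

section Lifting

variable {U V W : Type*} {G : SimpleGraph V} {C : SimpleGraph W} {H : SimpleGraph U}
  {p : H →g G} {q : C →g G} {u₀ u u' : U} {x₀ x y : W}

def IsWalkLiftEnd (p : H →g G) (q : C →g G) (u₀ : U) (x₀ : W) (u : U) (x : W) : Prop :=
  ∃ (a : H.Walk u₀ u) (b : C.Walk x₀ x), b.support.map q = a.support.map p

theorem IsWalkLiftEnd.map_eq (h : IsWalkLiftEnd p q u₀ x₀ u x) : q x = p u := by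
  obtain ⟨a, b, hab⟩ := h
  simpa using congrArg List.getLast? hab

theorem IsWalkLiftEnd.exists_adj (hq : IsTriangularCover q) (h : IsWalkLiftEnd p q u₀ x₀ u x)
    (hadj : H.Adj u u') : ∃ y, C.Adj x y ∧ IsWalkLiftEnd p q u₀ x₀ u' y := by
  obtain ⟨y, hxy, hy⟩ := hq.exists_adj_map_eq (h.map_eq ▸ p.map_adj hadj)
  obtain ⟨a, b, hab⟩ := h
  exact ⟨y, hxy, a.concat hadj, b.concat hxy, by simp [Walk.support_concat, hab, hy]⟩

theorem IsTriangularCover.exists_isWalkLiftEnd (hq : IsTriangularCover q) (hH : H.Connected)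
    (h₀ : q x₀ = p u₀) (u : U) : ∃ x, IsWalkLiftEnd p q u₀ x₀ u x := by
  obtain ⟨a⟩ := hH.preconnected u₀ u
  obtain ⟨x, b, hb⟩ := hq.exists_walk_lift (a.map p) h₀
  exact ⟨x, a, b, by rw [hb, Walk.support_map]⟩

theorem IsWalkLiftEnd.unique (hq : IsTriangularCover q)
    (hH : TriSimplyConnected H) (hx : IsWalkLiftEnd p q u₀ x₀ u x)
    (hy : IsWalkLiftEnd p q u₀ x₀ u y) : x = y := by
  obtain ⟨a, a', ha⟩ := hx
  obtain ⟨b, b', hb⟩ := hy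
  obtain ⟨m, ha'm, hm⟩ :=
    hq.exists_homotopic_lift ((hH.homotopic a b).map p) a'.isChain_adj_support ha
  have hmb' : m = b'.support :=
    hq.eq_of_map_eq (ha'm.isChain a'.isChain_adj_support) b'.isChain_adj_support
      (by simp [← ha'm.head?_eq]) (hm.trans hb.symm)
  simpa [hmb'] using ha'm.getLast?_eq

theorem IsTriangularCover.exists_lift (hq : IsTriangularCover q) (hH : TriSimplyConnected H)
    (p : H →g G) (h₀ : q x₀ = p u₀) : ∃ f : H →g C, (∀ u, q (f u) = p u) ∧ f u₀ = x₀ := by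
  choose f hf using hq.exists_isWalkLiftEnd hH.1 h₀
  refine ⟨⟨f, fun {u u'} hadj => ?_⟩, fun u => (hf u).map_eq, ?_⟩
  · obtain ⟨y, hxy, hy⟩ := (hf u).exists_adj hq hadj
    rwa [(hf u').unique hq hH hy]
  · exact (hf u₀).unique hq hH ⟨.nil, .nil, by simp [h₀]⟩

end Lifting

/-- The universal triangular cover of a connected graph is unique up to isomorphism. -/
theorem universal_cover_unique {V' V'' V : Type*} {G' : SimpleGraph V'}
    {G'' : SimpleGraph V''} {G : SimpleGraph V}
    (p : G' →g G) (hp : IsTriangularCover p) (hsc' : TriSimplyConnected G')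
    (q : G'' →g G) (hq : IsTriangularCover q) (hsc'' : TriSimplyConnected G'') :
    Nonempty (G' ≃g G'') := by
  obtain ⟨v₀'⟩ := hp.connDom.nonempty
  obtain ⟨v₀'', hv₀⟩ := hq.surjective (p v₀')
  obtain ⟨f, hf, hfv₀⟩ := hq.exists_lift hsc' p hv₀
  obtain ⟨g, hg, hgv₀⟩ := hp.exists_lift hsc'' q hv₀.symm
  have hgf : ∀ v, g (f v) = v := DFunLike.congr_fun <|
    hp.hom_ext (f₁ := g.comp f) (f₂ := .id) hsc'.1 (fun v => (hg _).trans (hf v)) v₀'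
      (by simp [hfv₀, hgv₀])
  have hfg : ∀ x, f (g x) = x := DFunLike.congr_fun <|
    hq.hom_ext (f₁ := f.comp g) (f₂ := .id) hsc''.1 (fun x => (hf _).trans (hg x)) v₀''
      (by simp [hfv₀, hgv₀])
  exact ⟨⟨⟨f, g, hgf, hfg⟩, fun {a b} => ⟨fun h => hgf a ▸ hgf b ▸ g.map_adj h, f.map_adj⟩⟩⟩
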